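/- arXiv:math/0409053 — 2 statements merged into one kernel-verified Lean document; each statement's English description precedes it below -/
import Mathlib

section
/- The following three conditions are equivalent: (i) the pair C, C^du is very good for integrating g; (ii) the pair C, C^du is good for integrating g and Lie(M^×) = Lie(M); (iii) the pair C, C^du is good for integrating g and the unit group M^× is dense in M in the Zariski topology. -/
open TensorProduct

attribute [instance 100] LieRing.ofAssociativeRing

universe u v w

/-- The data of a (full sub)category `C` of `g`-modules together with a category of duals:
an index type `ι`, for each index a `g`-module `V i`, and a chosen point-separating
subspace `du i` of the full linear dual of `V i`. -/
structure TannakaSetting (F : Type u) [Field F] (g : Type v) [LieRing g] [LieAlgebra F g] where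
  ι : Type w
  V : ι → Type w
  [iAdd : ∀ i, AddCommGroup (V i)]
  [iMod : ∀ i, Module F (V i)]
  ρ : ∀ i, g →ₗ⁅F⁆ Module.End F (V i)
  du : ∀ i, Submodule F (Module.Dual F (V i))

attribute [instance] TannakaSetting.iAdd TannakaSetting.iMod

namespace TannakaSetting

variable {F : Type u} [Field F] {g : Type v} [LieRing g] [LieAlgebra F g]
variable (D : TannakaSetting F g)

/-- `g`-equivariant linear maps between objects of the category. -/
def IsHom {i j : D.ι} (f : D.V i →ₗ[F] D.V j) : Prop :=
  ∀ x : g, f ∘ₗ (D.ρ i x : Module.End F (D.V i)) = (D.ρ j x : Module.End F (D.V j)) ∘ₗ f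

/-- An endomorphism of `V i` lies in `End_{V^du}(V)`, i.e. its transpose preserves
the chosen dual subspace. -/
def PreservesDu (i : D.ι) (f : Module.End F (D.V i)) : Prop :=
  ∀ φ ∈ D.du i, f.dualMap φ ∈ D.du i

/-- The action of `x ∈ g` on a tensor product of two objects. -/
noncomputable def tensorρ (i j : D.ι) (x : g) : Module.End F (D.V i ⊗[F] D.V j) :=
  TensorProduct.map (D.ρ i x) LinearMap.id + TensorProduct.map LinearMap.id (D.ρ j x)

/-- `e` realizes `V k` as a tensor product of the `g`-modules `V i` and `V j`. -/
def IsTensorProd (i j k : D.ι) (e : D.V k ≃ₗ[F] (D.V i ⊗[F] D.V j)) : Prop :=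
  ∀ x : g, e.toLinearMap ∘ₗ (D.ρ k x : Module.End F (D.V k)) = D.tensorρ i j x ∘ₗ e.toLinearMap

/-- `e` realizes `V k` as a direct sum of the `g`-modules `V i` and `V j`. -/
def IsSumProd (i j k : D.ι) (e : D.V k ≃ₗ[F] (D.V i × D.V j)) : Prop :=
  ∀ x : g, e.toLinearMap ∘ₗ (D.ρ k x : Module.End F (D.V k)) =
    ((D.ρ i x : Module.End F (D.V i)).prodMap (D.ρ j x : Module.End F (D.V j))) ∘ₗ e.toLinearMap

/-- `V i` is a one-dimensional trivial `g`-module. -/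
def IsTrivOneDim (i : D.ι) : Prop :=
  Module.finrank F (D.V i) = 1 ∧ ∀ x : g, (D.ρ i x : Module.End F (D.V i)) = 0

/-- The functional `φ ⊗ ψ` on a tensor product. -/
noncomputable def tensorDual {i j : D.ι} (φ : Module.Dual F (D.V i))
    (ψ : Module.Dual F (D.V j)) : Module.Dual F (D.V i ⊗[F] D.V j) :=
  TensorProduct.dualDistrib F (D.V i) (D.V j) (φ ⊗ₜ[F] ψ)

/-- The axioms on the pair of categories `C`, `C^du`:
`C` is closed under isomorphism, (binary) direct sums, tensor products, submodules,
contains a one-dimensional trivial module, `g` acts faithfully, and the duals separate points,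
are stable under the transposed `g`-action and under transposes of morphisms, and are compatible
with direct sums and tensor products. -/
structure IsGoodSetting : Prop where
  separating : ∀ (i : D.ι) (v : D.V i), v ≠ 0 → ∃ φ ∈ D.du i, φ v ≠ 0
  du_g : ∀ (i : D.ι) (x : g), D.PreservesDu i (D.ρ i x)
  du_hom : ∀ (i j : D.ι) (f : D.V i →ₗ[F] D.V j), D.IsHom f →
    ∀ ψ ∈ D.du j, f.dualMap ψ ∈ D.du i
  faithful : ∀ x : g, (∀ i, (D.ρ i x : Module.End F (D.V i)) = 0) → x = 0
  exists_triv : ∃ i, D.IsTrivOneDim i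
  exists_sum : ∀ i j : D.ι, ∃ (k : D.ι) (e : D.V k ≃ₗ[F] (D.V i × D.V j)), D.IsSumProd i j k e
  exists_tensor : ∀ i j : D.ι,
    ∃ (k : D.ι) (e : D.V k ≃ₗ[F] (D.V i ⊗[F] D.V j)), D.IsTensorProd i j k e
  du_tensor : ∀ (i j k : D.ι) (e : D.V k ≃ₗ[F] (D.V i ⊗[F] D.V j)), D.IsTensorProd i j k e →
    ∀ φ ∈ D.du i, ∀ ψ ∈ D.du j, e.toLinearMap.dualMap (D.tensorDual φ ψ) ∈ D.du k
  du_sum : ∀ (i j k : D.ι) (e : D.V k ≃ₗ[F] (D.V i × D.V j)), D.IsSumProd i j k e →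
    ∀ ξ : Module.Dual F (D.V k), ξ ∈ D.du k ↔
      ∃ φ ∈ D.du i, ∃ ψ ∈ D.du j,
        ξ = e.toLinearMap.dualMap
          ((LinearMap.fst F (D.V i) (D.V j)).dualMap φ +
            (LinearMap.snd F (D.V i) (D.V j)).dualMap ψ)
  submod_closed : ∀ (i : D.ι) (U : Submodule F (D.V i)), (∀ x : g, ∀ u ∈ U, D.ρ i x u ∈ U) →
    ∃ (k : D.ι) (e : D.V k ≃ₗ[F] ↥U), ∀ (x : g) (v : D.V k),
      (↑(e ((D.ρ k x) v)) : D.V i) = D.ρ i x ↑(e v)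
  isoClosed : ∀ (W : Type w) [AddCommGroup W] [Module F W] (ρW : g →ₗ⁅F⁆ Module.End F W)
    (i : D.ι) (e : D.V i ≃ₗ[F] W), (∀ (x : g) (v : D.V i), e (D.ρ i x v) = ρW x (e v)) →
    ∃ (k : D.ι) (e' : D.V k ≃ₗ[F] W), ∀ (x : g) (v : D.V k), e' (D.ρ k x v) = ρW x (e' v)

/-- The algebra `Nat` of natural transformations: families of endomorphisms
`m i ∈ End_{V^du}(V i)` commuting with all `g`-equivariant maps between objects. -/
def NatAlg : Set (∀ i, Module.End F (D.V i)) :=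
  { m | (∀ i, D.PreservesDu i (m i)) ∧
        ∀ (i j : D.ι) (f : D.V i →ₗ[F] D.V j), D.IsHom f → f ∘ₗ m i = m j ∘ₗ f }

/-- The Tannaka monoid `M`: natural transformations compatible with tensor products and
acting as the identity on trivial one-dimensional modules. -/
def M : Set (∀ i, Module.End F (D.V i)) :=
  { m | m ∈ D.NatAlg ∧
        (∀ (i j k : D.ι) (e : D.V k ≃ₗ[F] (D.V i ⊗[F] D.V j)), D.IsTensorProd i j k e →
          e.toLinearMap ∘ₗ m k = TensorProduct.map (m i) (m j) ∘ₗ e.toLinearMap) ∧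
        (∀ i, D.IsTrivOneDim i → m i = 1) }

/-- The matrix coefficient `f_{φ v}` as a function on the Tannaka monoid `M`. -/
def matCoef (i : D.ι) (φ : Module.Dual F (D.V i)) (v : D.V i) : ↥D.M → F :=
  fun m => φ (m.1 i v)

/-- The coordinate ring `F[M]` of matrix coefficients (a set of functions on `M`). -/
def coordRing : Set (↥D.M → F) :=
  { f | ∃ (i : D.ι) (φ : Module.Dual F (D.V i)) (v : D.V i), φ ∈ D.du i ∧ f = D.matCoef i φ v }

/-- The Lie algebra `Lie(M)` of the Tannaka monoid. -/
def LieM : Set (∀ i, Module.End F (D.V i)) :=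
  { x | x ∈ D.NatAlg ∧
        (∀ (i j k : D.ι) (e : D.V k ≃ₗ[F] (D.V i ⊗[F] D.V j)), D.IsTensorProd i j k e →
          e.toLinearMap ∘ₗ x k =
            (TensorProduct.map (x i) LinearMap.id +
              TensorProduct.map LinearMap.id (x j)) ∘ₗ e.toLinearMap) ∧
        (∀ i, D.IsTrivOneDim i → x i = 0) ∧
        (∃ δ : (↥D.M → F) → F, ∀ (i : D.ι) (φ : Module.Dual F (D.V i)) (v : D.V i),
          φ ∈ D.du i → δ (D.matCoef i φ v) = φ (x i v)) }

/-- The Lie algebra `Lie(N)` of a submonoid `N ⊆ M`: those `x ∈ Lie(M)` whose derivation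
`δ_x` annihilates the vanishing ideal `I(N) ⊆ F[M]`. -/
def LieOf (N : Set (↥D.M)) : Set (∀ i, Module.End F (D.V i)) :=
  { x | x ∈ D.LieM ∧ ∀ (i : D.ι) (φ : Module.Dual F (D.V i)) (v : D.V i), φ ∈ D.du i →
      (∀ n ∈ N, D.matCoef i φ v n = 0) → φ (x i v) = 0 }

/-- The unit group `M^×` of the Tannaka monoid, as a subset of `M`. -/
def unitsSet : Set (↥D.M) :=
  { m | ∃ n : ↥D.M, m.1 * n.1 = 1 ∧ n.1 * m.1 = 1 }

/-- The pair `C`, `C^du` is good for integrating `g`: `g ⊆ Lie(M)`. -/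
def Good : Prop := ∀ x : g, (fun i => (D.ρ i x : Module.End F (D.V i))) ∈ D.LieM

/-- The pair `C`, `C^du` is very good for integrating `g`: `g ⊆ Lie(M^×)`. -/
def VeryGood : Prop :=
  ∀ x : g, (fun i => (D.ρ i x : Module.End F (D.V i))) ∈ D.LieOf D.unitsSet

/-- A subset `S ⊆ M` is Zariski dense in `M`. -/
def DenseIn (S : Set (↥D.M)) : Prop :=
  ∀ f ∈ D.coordRing, (∀ m ∈ S, f m = 0) → ∀ m, f m = 0

theorem one_mem_M : (1 : ∀ i, Module.End F (D.V i)) ∈ D.M := by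
  refine ⟨⟨?_, ?_⟩, ?_, ?_⟩
  · intro i φ hφ
    simpa [Module.End.one_eq_id, LinearMap.dualMap_id] using hφ
  · intro i j f _
    ext v
    simp
  · intro i j k e _
    ext v
    simp [TensorProduct.map_one]
  · intro i _
    rfl

/-- The unit of the Tannaka monoid as an element of the subtype `↥M`. -/
def oneM : ↥D.M := ⟨1, D.one_mem_M⟩

/-!
The only nontrivial implication is that `g ⊆ Lie(M^×)` forces `M^×` to be Zariski dense.
Given a matrix coefficient `f_{φ v}` vanishing on `M^×`, consider the subspace `W` of those `w`
for which every `f_{ψ v}` vanishing on `M^×` forces `f_{ψ w}` to vanish on `M^×`. Translating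
`ψ` by units and using `g ⊆ Lie(M^×)` shows that `W` is a `g`-submodule, so it is an object of
`C` and every `m ∈ M` maps `v ∈ W` into `W`; taking `ψ = φ` and evaluating at `1` gives
`f_{φ v}(m) = 0`. Conversely, on a dense subset a derivation `δ_x` cannot distinguish a matrix
coefficient vanishing there from `0`, so `Lie(M^×) = Lie(M)`.
-/

theorem mul_mem_M {m n : ∀ i, Module.End F (D.V i)} (hm : m ∈ D.M) (hn : n ∈ D.M) :
    m * n ∈ D.M := by
  obtain ⟨⟨hm_du, hm_nat⟩, hm_tensor, hm_triv⟩ := hm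
  obtain ⟨⟨hn_du, hn_nat⟩, hn_tensor, hn_triv⟩ := hn
  refine ⟨⟨fun i φ hφ => hn_du i _ (hm_du i φ hφ), fun i j f hf => ?_⟩, fun i j k e he => ?_,
    fun i hi => ?_⟩
  · change f ∘ₗ m i ∘ₗ n i = m j ∘ₗ n j ∘ₗ f
    rw [← LinearMap.comp_assoc, hm_nat i j f hf, LinearMap.comp_assoc, hn_nat i j f hf]
  · change e.toLinearMap ∘ₗ m k ∘ₗ n k = TensorProduct.map (m i ∘ₗ n i) (m j ∘ₗ n j) ∘ₗ _
    rw [← LinearMap.comp_assoc, hm_tensor i j k e he, LinearMap.comp_assoc,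
      hn_tensor i j k e he, ← LinearMap.comp_assoc, TensorProduct.map_comp]
  · change m i * n i = 1
    rw [hm_triv i hi, hn_triv i hi, one_mul]

def mulM (a b : ↥D.M) : ↥D.M := ⟨a.1 * b.1, D.mul_mem_M a.2 b.2⟩

theorem mulM_mem_unitsSet {a b : ↥D.M} (ha : a ∈ D.unitsSet) (hb : b ∈ D.unitsSet) :
    D.mulM a b ∈ D.unitsSet := by
  obtain ⟨a', ha_right, ha_left⟩ := ha
  obtain ⟨b', hb_right, hb_left⟩ := hb
  refine ⟨D.mulM b' a', ?_, ?_⟩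
  · change a.1 * b.1 * (b'.1 * a'.1) = 1
    rw [mul_assoc, ← mul_assoc b.1, hb_right, one_mul, ha_right]
  · change b'.1 * a'.1 * (a.1 * b.1) = 1
    rw [mul_assoc, ← mul_assoc a'.1, ha_left, one_mul, hb_left]

theorem oneM_mem_unitsSet : D.oneM ∈ D.unitsSet :=
  ⟨D.oneM, one_mul 1, one_mul 1⟩

theorem apply_mem_of_mem_NatAlg (HG : D.IsGoodSetting) {m : ∀ i, Module.End F (D.V i)}
    (hm : m ∈ D.NatAlg) {i : D.ι} (U : Submodule F (D.V i))
    (hU : ∀ x : g, ∀ u ∈ U, D.ρ i x u ∈ U) {u : D.V i} (hu : u ∈ U) : m i u ∈ U := by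
  obtain ⟨k, e, he⟩ := HG.submod_closed i U hU
  let ι : D.V k →ₗ[F] D.V i := U.subtype ∘ₗ e.toLinearMap
  have hι : D.IsHom ι := fun x => LinearMap.ext (he x)
  have hnat : m i (ι (e.symm ⟨u, hu⟩)) = ι (m k (e.symm ⟨u, hu⟩)) :=
    (LinearMap.congr_fun (hm.2 k i ι hι) _).symm
  simp only [ι, LinearMap.comp_apply, LinearEquiv.coe_coe, LinearEquiv.apply_symm_apply,
    Submodule.subtype_apply] at hnat
  exact hnat ▸ (e _).2

def vanishingHull (S : Set ↥D.M) (i : D.ι) (v : D.V i) : Submodule F (D.V i) where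
  carrier := {w | ∀ ψ ∈ D.du i, (∀ n ∈ S, D.matCoef i ψ v n = 0) → ∀ n ∈ S, D.matCoef i ψ w n = 0}
  add_mem' ha hb ψ hψ hv n hn := by
    have ha := ha ψ hψ hv n hn
    have hb := hb ψ hψ hv n hn
    simp_all only [matCoef, map_add, add_zero]
  zero_mem' _ _ _ _ _ := by simp only [matCoef, map_zero]
  smul_mem' c _ ha ψ hψ hv n hn := by
    have ha := ha ψ hψ hv n hn
    simp_all only [matCoef, map_smul, smul_zero]

theorem self_mem_vanishingHull (S : Set ↥D.M) (i : D.ι) (v : D.V i) :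
    v ∈ D.vanishingHull S i v :=
  fun _ _ hv => hv

theorem vanishingHull_invariant {S : Set ↥D.M}
    (hS : ∀ a ∈ S, ∀ b ∈ S, D.mulM a b ∈ S) (hg : ∀ x : g, (fun i => D.ρ i x) ∈ D.LieOf S)
    (i : D.ι) (v : D.V i) (x : g) :
    ∀ w ∈ D.vanishingHull S i v, D.ρ i x w ∈ D.vanishingHull S i v := by
  intro w hw ψ hψ hv n hn
  -- The coefficient of the translated functional `ψ ∘ n` at `w` vanishes on `S`.
  exact (hg x).2 i ((n.1 i).dualMap ψ) w (n.2.1.1 i ψ hψ)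
    fun m hm => hw ψ hψ hv (D.mulM n m) (hS n hn m hm)

theorem denseIn_of_forall_mem_lieOf (HG : D.IsGoodSetting) {S : Set ↥D.M}
    (hS : ∀ a ∈ S, ∀ b ∈ S, D.mulM a b ∈ S) (hone : D.oneM ∈ S)
    (hg : ∀ x : g, (fun i => D.ρ i x) ∈ D.LieOf S) : D.DenseIn S := by
  rintro _ ⟨i, φ, v, hφ, rfl⟩ hv m
  have hmv : m.1 i v ∈ D.vanishingHull S i v :=
    D.apply_mem_of_mem_NatAlg HG m.2.1 _ (D.vanishingHull_invariant hS hg i v)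
      (D.self_mem_vanishingHull S i v)
  exact hmv φ hφ hv D.oneM hone

theorem apply_eq_zero_of_mem_LieM {x : ∀ i, Module.End F (D.V i)} (hx : x ∈ D.LieM) {i : D.ι}
    {φ : Module.Dual F (D.V i)} (hφ : φ ∈ D.du i) {v : D.V i}
    (h : ∀ m, D.matCoef i φ v m = 0) : φ (x i v) = 0 := by
  obtain ⟨δ, hδ⟩ := hx.2.2.2
  have hcoef : D.matCoef i φ v = D.matCoef i 0 v := funext fun m => (h m).trans rfl
  rw [← hδ i φ v hφ, hcoef, hδ i 0 v (Submodule.zero_mem _), LinearMap.zero_apply]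

theorem DenseIn.lieOf_eq {S : Set ↥D.M} (hS : D.DenseIn S) : D.LieOf S = D.LieM :=
  Set.ext fun _ => ⟨And.left, fun hx => ⟨hx, fun _ _ _ hφ hv =>
    D.apply_eq_zero_of_mem_LieM hx hφ (hS _ ⟨_, _, _, hφ, rfl⟩ hv)⟩⟩

theorem good_of_veryGood (h : D.VeryGood) : D.Good := fun x => (h x).1

theorem veryGood_of_lieOf_eq (hg : D.Good) (he : D.LieOf D.unitsSet = D.LieM) : D.VeryGood :=
  fun x => he ▸ hg x

theorem denseIn_unitsSet_of_veryGood (HG : D.IsGoodSetting) (h : D.VeryGood) :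
    D.DenseIn D.unitsSet :=
  D.denseIn_of_forall_mem_lieOf HG (fun _ ha _ hb => D.mulM_mem_unitsSet ha hb)
    D.oneM_mem_unitsSet h

end TannakaSetting

open TensorProduct

variable {F : Type u} [Field F] [CharZero F] {g : Type v} [LieRing g] [LieAlgebra F g]

/-- **Good versus very good for integrating `g`.**
The following are equivalent: (i) the pair `C`, `C^du` is very good for integrating `g`;
(ii) the pair is good for integrating `g` and `Lie(M^×) = Lie(M)`;
(iii) the pair is good for integrating `g` and the unit group `M^×` is Zariski dense in `M`. -/
theorem stmt_4 (D : TannakaSetting F g) (HG : D.IsGoodSetting) :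
    (D.VeryGood ↔ (D.Good ∧ D.LieOf D.unitsSet = D.LieM)) ∧
    (D.VeryGood ↔ (D.Good ∧ D.DenseIn D.unitsSet)) := by
  have hdense : D.VeryGood → D.DenseIn D.unitsSet := D.denseIn_unitsSet_of_veryGood HG
  refine ⟨⟨fun h => ⟨D.good_of_veryGood h, (hdense h).lieOf_eq⟩, ?_⟩,
    ⟨fun h => ⟨D.good_of_veryGood h, hdense h⟩, ?_⟩⟩
  · rintro ⟨hg, he⟩
    exact D.veryGood_of_lieOf_eq hg he
  · rintro ⟨hg, hd⟩
    exact D.veryGood_of_lieOf_eq hg hd.lieOf_eq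
end

section
/- Suppose every g-module contained in C is finite dimensional, C^du is the category of full duals, and in addition for every g-module V contained in C its dual g-module V* (with action (x·φ)(v) := −φ(x·v)) is also contained in C. Then the Tannaka monoid M is a group, and the coordinate ring F[M], with the bialgebra structure induced by the multiplication of M and with the comorphism of the inversion map as antipode, is a Hopf algebra. -/
/-!
Every `m ∈ M` fixes the `g`-invariant functionals on objects of `C`: such a functional is a
morphism into the one-dimensional trivial module, on which `m` is the identity. Applied to the
evaluation pairing `V ⊗ V* → F` this gives `(m_{V*} ψ)(m_V v) = ψ v`, so `m_V` is injective,
hence invertible as `V` is finite dimensional; the componentwise inverse is again natural and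
compatible with tensor products, so it lies in `M`. The same identity exhibits `f_{φ v} ∘ inv`
as a matrix coefficient of `V*`, and expanding in a basis `(b_l)` of `V` gives the
comultiplication `f_{φ v}(m m') = ∑ f_{φ b_l}(m) f_{b_l^* v}(m')`, for which the antipode
identity reduces to `m⁻¹ m = 1`.
-/

open TensorProduct

attribute [local instance 100] LieRing.ofAssociativeRing

universe u v w

open TensorProduct

namespace TannakaSetting

variable {F : Type u} [Field F] {g : Type v} [LieRing g] [LieAlgebra F g]
  {D : TannakaSetting F g} {m : ∀ i, Module.End F (D.V i)}

theorem comp_eq_self_of_invariant (HG : D.IsGoodSetting) (hm : m ∈ D.M) {l : D.ι}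
    (β : Module.Dual F (D.V l))
    (hβ : ∀ x : g, β ∘ₗ (D.ρ l x : Module.End F (D.V l)) = 0) :
    β ∘ₗ m l = β := by
  obtain ⟨t, hdim, htriv⟩ := HG.exists_triv
  have : Nontrivial (D.V t) := Module.nontrivial_of_finrank_eq_succ hdim
  obtain ⟨t0, ht0⟩ := exists_ne (0 : D.V t)
  let f : D.V l →ₗ[F] D.V t := LinearMap.toSpanSingleton F (D.V t) t0 ∘ₗ β
  have hf : D.IsHom f := fun x => by
    simp only [f, htriv x, LinearMap.comp_assoc, hβ x, LinearMap.comp_zero,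
      LinearMap.zero_comp]
  have hnat : f ∘ₗ m l = f := by rw [hm.1.2 l t f hf, hm.2.2 t ⟨hdim, htriv⟩]; rfl
  ext v
  exact smul_left_injective F ht0 (LinearMap.congr_fun hnat v)

theorem apply_apply_eq_of_mem_M (HG : D.IsGoodSetting) (hm : m ∈ D.M) {i k : D.ι}
    (e : D.V k ≃ₗ[F] Module.Dual F (D.V i))
    (he : ∀ (x : g) (w : D.V k),
      e (D.ρ k x w) = - (D.ρ i x : Module.End F (D.V i)).dualMap (e w))
    (w : D.V k) (v : D.V i) : e (m k w) (m i v) = e w v := by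
  obtain ⟨l, et, het⟩ := HG.exists_tensor i k
  let β : Module.Dual F (D.V i ⊗[F] D.V k) :=
    TensorProduct.lift (e : D.V k →ₗ[F] Module.Dual F (D.V i)).flip
  have hβ : ∀ x : g, β ∘ₗ D.tensorρ i k x = 0 := by
    intro x
    ext v w
    simp [β, tensorρ, he]
  have hinv := comp_eq_self_of_invariant HG hm (β ∘ₗ et.toLinearMap) fun x => by
    rw [LinearMap.comp_assoc, het x, ← LinearMap.comp_assoc, hβ x, LinearMap.zero_comp]
  have hpair := LinearMap.congr_fun hinv (et.symm (v ⊗ₜ w))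
  have htens := LinearMap.congr_fun (hm.2.1 i k l et het) (et.symm (v ⊗ₜ w))
  simp only [LinearMap.comp_apply, LinearEquiv.coe_coe, LinearEquiv.apply_symm_apply]
    at hpair htens
  simpa [β, htens] using hpair

theorem isUnit_apply_of_mem_M (HG : D.IsGoodSetting) (hm : m ∈ D.M) {i k : D.ι}
    [FiniteDimensional F (D.V i)] (e : D.V k ≃ₗ[F] Module.Dual F (D.V i))
    (he : ∀ (x : g) (w : D.V k),
      e (D.ρ k x w) = - (D.ρ i x : Module.End F (D.V i)).dualMap (e w)) :
    IsUnit (m i) := by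
  rw [LinearMap.isUnit_iff_ker_eq_bot, LinearMap.ker_eq_bot']
  intro v hv
  refine (Module.forall_dual_apply_eq_zero_iff F v).1 fun φ => ?_
  simpa [hv] using (apply_apply_eq_of_mem_M HG hm e he (e.symm φ) v).symm

theorem mem_M_of_mul_eq_one {n : ∀ i, Module.End F (D.V i)} (hm : m ∈ D.M) (hmn : m * n = 1)
    (hnm : n * m = 1) (hn : ∀ i, D.PreservesDu i (n i)) : n ∈ D.M := by
  have hmn' : ∀ i w, m i (n i w) = w := fun i => LinearMap.congr_fun (congrFun hmn i)
  have hnm' : ∀ i w, n i (m i w) = w := fun i => LinearMap.congr_fun (congrFun hnm i)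
  have hnm_id : ∀ i, n i ∘ₗ m i = LinearMap.id := fun i => LinearMap.ext (hnm' i)
  refine ⟨⟨hn, fun i j f hf => ?_⟩, fun i j k e he => ?_, fun i hi => ?_⟩
  · ext v
    have := LinearMap.congr_fun (hm.1.2 i j f hf) (n i v)
    simp only [LinearMap.comp_apply, hmn'] at this ⊢
    rw [this, hnm']
  · ext v
    have := LinearMap.congr_fun (hm.2.1 i j k e he) (n k v)
    simp only [LinearMap.comp_apply, LinearEquiv.coe_coe, hmn'] at this ⊢
    rw [this, TensorProduct.map_map, hnm_id, hnm_id, TensorProduct.map_id, LinearMap.id_apply]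
  · calc n i = n i * m i := by rw [hm.2.2 i hi, mul_one]
      _ = 1 := congrFun hnm i

theorem exists_inv_mem_M (HG : D.IsGoodSetting) (hfd : ∀ i, FiniteDimensional F (D.V i))
    (hfull : ∀ i, D.du i = ⊤)
    (hdual : ∀ i, ∃ (k : D.ι) (e : D.V k ≃ₗ[F] Module.Dual F (D.V i)),
      ∀ (x : g) (v : D.V k), e (D.ρ k x v) = - (D.ρ i x : Module.End F (D.V i)).dualMap (e v))
    (hm : m ∈ D.M) : ∃ n ∈ D.M, m * n = 1 ∧ n * m = 1 := by
  have hu : IsUnit m := Pi.isUnit_iff.2 fun i => by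
    have := hfd i
    obtain ⟨k, e, he⟩ := hdual i
    exact isUnit_apply_of_mem_M HG hm e he
  exact ⟨_, mem_M_of_mul_eq_one hm hu.mul_val_inv hu.val_inv_mul
    (fun i φ _ => hfull i ▸ Submodule.mem_top), hu.mul_val_inv, hu.val_inv_mul⟩

theorem matCoef_eq_matCoef_of_mul_eq_one (HG : D.IsGoodSetting) {i k : D.ι}
    (e : D.V k ≃ₗ[F] Module.Dual F (D.V i))
    (he : ∀ (x : g) (w : D.V k),
      e (D.ρ k x w) = - (D.ρ i x : Module.End F (D.V i)).dualMap (e w))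
    (φ : Module.Dual F (D.V i)) (v : D.V i) {m n : ↥D.M} (hmn : m.1 * n.1 = 1) :
    D.matCoef k (Module.Dual.eval F (D.V i) v ∘ₗ e.toLinearMap) (e.symm φ) m =
      D.matCoef i φ v n := by
  have hmnv : m.1 i (n.1 i v) = v := LinearMap.congr_fun (congrFun hmn i) v
  calc e (m.1 k (e.symm φ)) v = e (m.1 k (e.symm φ)) (m.1 i (n.1 i v)) := by rw [hmnv]
    _ = φ (n.1 i v) := by rw [apply_apply_eq_of_mem_M HG m.2 e he, e.apply_symm_apply]

theorem apply_apply_eq_sum_matCoef {κ : Type*} [Fintype κ] {i : D.ι}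
    (b : Module.Basis κ F (D.V i)) (φ : Module.Dual F (D.V i)) (v : D.V i) (m m' : ↥D.M) :
    φ (m.1 i (m'.1 i v)) = ∑ l, D.matCoef i φ (b l) m * D.matCoef i (b.coord l) v m' := by
  have := LinearMap.congr_fun (b.sum_dual_apply_smul_coord (φ ∘ₗ m.1 i)) (m'.1 i v)
  simpa [matCoef, mul_comm] using this.symm

end TannakaSetting

variable {F : Type u} [Field F] [CharZero F] {g : Type v} [LieRing g] [LieAlgebra F g]

/-- **The classical case with duals: `M` is a group and `F[M]` is a Hopf algebra.**
Suppose every `g`-module contained in `C` is finite dimensional, `C^du` is the category of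
full duals, and for every `g`-module `V` in `C` its dual `g`-module `V*` (with action
`(x · φ)(v) = -φ(x · v)`) is also contained in `C`.  Then the Tannaka monoid `M` is a group,
and `F[M]`, with the bialgebra structure induced by the multiplication of `M` and the
comorphism of the inversion map as antipode, is a Hopf algebra. -/
theorem stmt_13 (D : TannakaSetting F g) (HG : D.IsGoodSetting)
    (hfd : ∀ i, FiniteDimensional F (D.V i))
    (hfull : ∀ i, D.du i = ⊤)
    (hdual : ∀ i, ∃ (k : D.ι) (e : D.V k ≃ₗ[F] Module.Dual F (D.V i)),
      ∀ (x : g) (v : D.V k), e (D.ρ k x v) = - (D.ρ i x : Module.End F (D.V i)).dualMap (e v)) :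
    -- `M` is a group:
    (∀ m ∈ D.M, ∃ n ∈ D.M, m * n = 1 ∧ n * m = 1) ∧
    -- the comorphism of the inversion map exists, and together with the comultiplication
    -- given by the comorphism of the multiplication map it satisfies the antipode axiom:
    (∀ f ∈ D.coordRing,
      (∃ h ∈ D.coordRing, ∀ m n : ↥D.M, m.1 * n.1 = 1 → n.1 * m.1 = 1 → h m = f n) ∧
      (∃ (N : ℕ) (gs hs : Fin N → (↥D.M → F)),
        (∀ k, gs k ∈ D.coordRing ∧ hs k ∈ D.coordRing) ∧
        (∀ (m m' : ↥D.M) (hmm : m.1 * m'.1 ∈ D.M),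
          f ⟨m.1 * m'.1, hmm⟩ = ∑ k, gs k m * hs k m') ∧
        (∀ m n : ↥D.M, m.1 * n.1 = 1 → n.1 * m.1 = 1 →
          ∑ k, gs k n * hs k m = f D.oneM))) := by
  refine ⟨fun m hm => D.exists_inv_mem_M HG hfd hfull hdual hm, ?_⟩
  rintro f ⟨i, φ, v, hφ, rfl⟩
  obtain ⟨k, e, he⟩ := hdual i
  have := hfd i
  let b := Module.finBasis F (D.V i)
  have mem_du : ∀ j (ψ : Module.Dual F (D.V j)), ψ ∈ D.du j :=
    fun j _ => hfull j ▸ Submodule.mem_top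
  refine ⟨⟨_, ⟨k, _, e.symm φ, mem_du _ _, rfl⟩,
      fun m n hmn _ => D.matCoef_eq_matCoef_of_mul_eq_one HG e he φ v hmn⟩,
    _, _, _, fun l => ⟨⟨i, φ, b l, hφ, rfl⟩, ⟨i, b.coord l, v, mem_du _ _, rfl⟩⟩,
    fun m m' _ => D.apply_apply_eq_sum_matCoef b φ v m m', fun m n _ hnm => ?_⟩
  rw [← D.apply_apply_eq_sum_matCoef b φ v n m]
  exact congrArg φ (LinearMap.congr_fun (congrFun hnm i) v)
end
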